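/- arXiv:2603.16766 — 6 statements merged into one kernel-verified Lean document; each statement's English description precedes it below -/
import Mathlib

section
/- Let k be a field and let Ω and X be sets. On the free associative (noncommutative) k-algebra R = k⟨M(Ω) × X⟩ on the set M(Ω) × X, where M(Ω) = (Ω →₀ ℕ) is the free commutative monoid on Ω, for each ω ∈ Ω there exists a unique k-derivation D_ω : R → R satisfying D_ω(ι(α,x)) = ι(α + e_ω, x) for every α ∈ M(Ω) and x ∈ X (here ι is the canonical inclusion of generators and e_ω ∈ M(Ω) is the indicator of ω). The derivations D_ω pairwise commute, and (R, (D_ω)_{ω∈Ω}) is the free commuting multi-differential noncommutative algebra on X: for every associative k-algebra A equipped with a family (δ_ω)_{ω∈Ω} of pairwise commuting k-derivations of A and every map f : X → A, there exists a unique k-algebra homomorphism φ : R → A such that φ(ι(0,x)) = f(x) for all x ∈ X and φ ∘ D_ω = δ_ω ∘ φ for all ω ∈ Ω. -/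
/-- A `k`-linear map `d : A → A` is a derivation of the `k`-algebra `A` if it satisfies
the Leibniz rule. (Stated for possibly noncommutative `A`.) -/
def IsLeibnizDerivation {k A : Type*} [CommSemiring k] [Semiring A] [Algebra k A]
    (d : A →ₗ[k] A) : Prop :=
  ∀ a b : A, d (a * b) = d a * b + a * d b

/-!
A linear map `d` out of a free algebra with `d (a * b) = d a * φ b + φ a * d b` for an algebra
map `φ` is determined by its values on the generators. This one rigidity statement gives the
uniqueness of `D_ω`, the commutation of `D_ω` and `D_τ` (their commutator is a derivation
vanishing on the generators), and the compatibility `φ ∘ D_ω = δ_ω ∘ φ` of the lift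
`φ (ι (α, x)) = δ^α (f x)`. Uniqueness of `φ` holds because `ι (α + e_ω, x) = D_ω (ι (α, x))`,
so every generator is reached from some `ι (0, x)` by the `D_ω`.
-/

@[elab_as_elim]
theorem Finsupp.induction_add_single_one {Ω : Type*} {P : (Ω →₀ ℕ) → Prop} (α : Ω →₀ ℕ)
    (zero : P 0) (add_single_one : ∀ α ω, P α → P (α + Finsupp.single ω 1)) : P α := by
  classical
  obtain ⟨s, rfl⟩ := Multiset.toFinsupp.surjective α
  induction s using Multiset.induction_on with
  | empty => simpa using zero
  | cons ω s ih =>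
    simpa [← Multiset.singleton_add, Multiset.toFinsupp_add, add_comm] using
      add_single_one _ ω ih

section NoncommProdPow
variable {Ω M : Type*} [Monoid M] (f : Ω → M) (hf : ∀ ω τ, Commute (f ω) (f τ))

/-- `∏ ω, f ω ^ α ω`, well defined in any order because the `f ω` commute. -/
noncomputable def Finsupp.noncommProdPow (α : Ω →₀ ℕ) : M :=
  (α.toMultiset.map f).noncommProd fun _ hx _ hy _ => by
    obtain ⟨ω, -, rfl⟩ := Multiset.mem_map.mp hx
    obtain ⟨τ, -, rfl⟩ := Multiset.mem_map.mp hy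
    exact hf ω τ

@[simp]
theorem Finsupp.noncommProdPow_zero : Finsupp.noncommProdPow f hf 0 = 1 := by
  simp [Finsupp.noncommProdPow]

theorem Finsupp.noncommProdPow_add_single_one (α : Ω →₀ ℕ) (ω : Ω) :
    Finsupp.noncommProdPow f hf (α + Finsupp.single ω 1) =
      f ω * Finsupp.noncommProdPow f hf α := by
  simp only [Finsupp.noncommProdPow, add_comm α, Finsupp.toMultiset_add,
    Finsupp.toMultiset_single, one_nsmul, Multiset.singleton_add, Multiset.map_cons,
    Multiset.noncommProd_cons]

end NoncommProdPow

section Leibniz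
variable {k S A : Type*} [CommSemiring k] [Ring A] [Algebra k A]

theorem map_algebraMap_eq_zero_of_leibniz {B : Type*} [Semiring B] [Algebra k B]
    (φ : B →ₐ[k] A) {d : B →ₗ[k] A} (hd : ∀ a b, d (a * b) = d a * φ b + φ a * d b)
    (r : k) :
    d (algebraMap k B r) = 0 := by
  have h1 : d 1 = 0 := by simpa using hd 1 1
  rw [Algebra.algebraMap_eq_smul_one, map_smul, h1, smul_zero]

theorem FreeAlgebra.linearMap_ext_of_leibniz (φ : FreeAlgebra k S →ₐ[k] A)
    {d₁ d₂ : FreeAlgebra k S →ₗ[k] A}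
    (h₁ : ∀ a b, d₁ (a * b) = d₁ a * φ b + φ a * d₁ b)
    (h₂ : ∀ a b, d₂ (a * b) = d₂ a * φ b + φ a * d₂ b)
    (h : ∀ s, d₁ (FreeAlgebra.ι k s) = d₂ (FreeAlgebra.ι k s)) : d₁ = d₂ := by
  ext r
  induction r using FreeAlgebra.induction with
  | grade0 r =>
    rw [map_algebraMap_eq_zero_of_leibniz φ h₁, map_algebraMap_eq_zero_of_leibniz φ h₂]
  | grade1 s => exact h s
  | mul a b ha hb => rw [h₁, h₂, ha, hb]
  | add a b ha hb => rw [map_add, map_add, ha, hb]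

theorem IsLeibnizDerivation.ext_freeAlgebra {k S : Type*} [CommRing k]
    {d₁ d₂ : FreeAlgebra k S →ₗ[k] FreeAlgebra k S}
    (h₁ : IsLeibnizDerivation d₁) (h₂ : IsLeibnizDerivation d₂)
    (h : ∀ s, d₁ (FreeAlgebra.ι k s) = d₂ (FreeAlgebra.ι k s)) : d₁ = d₂ :=
  FreeAlgebra.linearMap_ext_of_leibniz (AlgHom.id k _) (fun a b => h₁ a b)
    (fun a b => h₂ a b) h

theorem IsLeibnizDerivation.commutator {d₁ d₂ : A →ₗ[k] A} (h₁ : IsLeibnizDerivation d₁)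
    (h₂ : IsLeibnizDerivation d₂) : IsLeibnizDerivation (d₁ * d₂ - d₂ * d₁) := by
  intro a b
  simp only [LinearMap.sub_apply, Module.End.mul_apply, h₁ a b, h₂ a b, map_add, h₁ _ b,
    h₂ _ b, h₁ a, h₂ a]
  noncomm_ring

theorem isLeibnizDerivation_zero : IsLeibnizDerivation (0 : A →ₗ[k] A) := by
  intro a b
  simp

end Leibniz

namespace FreeAlgebra
variable {k S : Type*} [CommSemiring k]

/-- Since `ε² = 0` in the square-zero extension, `r ↦ r + d r • ε` is multiplicative exactly
when `d` is a derivation; so the derivation extending `g` is read off the lift of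
`s ↦ ι s + g s • ε`. -/
noncomputable def liftTrivSqZeroExt (g : S → FreeAlgebra k S) :
    FreeAlgebra k S →ₐ[k] TrivSqZeroExt (FreeAlgebra k S) (FreeAlgebra k S) :=
  lift k fun s => TrivSqZeroExt.inl (ι k s) + TrivSqZeroExt.inr (g s)

noncomputable def liftDerivation (g : S → FreeAlgebra k S) :
    FreeAlgebra k S →ₗ[k] FreeAlgebra k S :=
  ((TrivSqZeroExt.sndHom _ _).restrictScalars k).comp (liftTrivSqZeroExt g).toLinearMap

theorem fst_liftTrivSqZeroExt (g : S → FreeAlgebra k S) (r : FreeAlgebra k S) :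
    (liftTrivSqZeroExt g r).fst = r := by
  suffices (TrivSqZeroExt.fstHom k _ _).comp (liftTrivSqZeroExt g) = AlgHom.id k _ from
    AlgHom.congr_fun this r
  ext s
  simp [liftTrivSqZeroExt]

@[simp]
theorem liftDerivation_ι (g : S → FreeAlgebra k S) (s : S) :
    liftDerivation g (ι k s) = g s := by
  simp [liftDerivation, liftTrivSqZeroExt]

theorem isLeibnizDerivation_liftDerivation (g : S → FreeAlgebra k S) :
    IsLeibnizDerivation (liftDerivation g) := by
  intro a b
  simp [liftDerivation, fst_liftTrivSqZeroExt, add_comm]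

end FreeAlgebra

section FreeCommutingMultiDifferential
variable (k : Type*) [CommRing k] {Ω : Type*} (X : Type*)

local notation "R" => FreeAlgebra k ((Ω →₀ ℕ) × X)

noncomputable def freeDeriv (ω : Ω) : R →ₗ[k] R :=
  FreeAlgebra.liftDerivation fun p => FreeAlgebra.ι k (p.1 + Finsupp.single ω 1, p.2)

@[simp]
theorem freeDeriv_ι (ω : Ω) (α : Ω →₀ ℕ) (x : X) :
    freeDeriv k X ω (FreeAlgebra.ι k (α, x)) = FreeAlgebra.ι k (α + Finsupp.single ω 1, x) :=
  FreeAlgebra.liftDerivation_ι _ _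

theorem isLeibnizDerivation_freeDeriv (ω : Ω) : IsLeibnizDerivation (freeDeriv k X ω) :=
  FreeAlgebra.isLeibnizDerivation_liftDerivation _

theorem eq_freeDeriv_of_isLeibnizDerivation (ω : Ω) {D : R →ₗ[k] R}
    (hD : IsLeibnizDerivation D)
    (hι : ∀ α x, D (FreeAlgebra.ι k (α, x)) = FreeAlgebra.ι k (α + Finsupp.single ω 1, x)) :
    D = freeDeriv k X ω :=
  hD.ext_freeAlgebra (isLeibnizDerivation_freeDeriv k X ω) fun ⟨α, x⟩ => by
    rw [hι, freeDeriv_ι]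

theorem freeDeriv_freeDeriv_comm (ω τ : Ω) (r : R) :
    freeDeriv k X ω (freeDeriv k X τ r) = freeDeriv k X τ (freeDeriv k X ω r) := by
  have hcomm : freeDeriv k X ω * freeDeriv k X τ - freeDeriv k X τ * freeDeriv k X ω = 0 :=
    ((isLeibnizDerivation_freeDeriv k X ω).commutator
      (isLeibnizDerivation_freeDeriv k X τ)).ext_freeAlgebra isLeibnizDerivation_zero
      fun ⟨α, x⟩ => by simp [add_right_comm]
  exact sub_eq_zero.mp (LinearMap.congr_fun hcomm r)

variable {X} {A : Type*} [Ring A] [Algebra k A] {δ : Ω → (A →ₗ[k] A)}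

theorem algHom_ext_of_comp_freeDeriv {ψ₁ ψ₂ : R →ₐ[k] A}
    (h₁ : ∀ ω r, ψ₁ (freeDeriv k X ω r) = δ ω (ψ₁ r))
    (h₂ : ∀ ω r, ψ₂ (freeDeriv k X ω r) = δ ω (ψ₂ r))
    (h₀ : ∀ x, ψ₁ (FreeAlgebra.ι k (0, x)) = ψ₂ (FreeAlgebra.ι k (0, x))) : ψ₁ = ψ₂ := by
  refine FreeAlgebra.hom_ext (funext fun ⟨α, x⟩ => ?_)
  induction α using Finsupp.induction_add_single_one with
  | zero => exact h₀ x
  | add_single_one α ω ih =>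
    simp only [Function.comp_apply, ← freeDeriv_ι, h₁, h₂] at ih ⊢
    rw [ih]

variable (δ) (hc : ∀ ω τ, Commute (δ ω) (δ τ)) (f : X → A)

noncomputable def freeDerivLift : R →ₐ[k] A :=
  FreeAlgebra.lift k fun p => Finsupp.noncommProdPow δ hc p.1 (f p.2)

@[simp]
theorem freeDerivLift_ι (α : Ω →₀ ℕ) (x : X) :
    freeDerivLift k δ hc f (FreeAlgebra.ι k (α, x)) = Finsupp.noncommProdPow δ hc α (f x) :=
  FreeAlgebra.lift_ι_apply _ _

theorem freeDerivLift_freeDeriv (hδ : ∀ ω, IsLeibnizDerivation (δ ω)) (ω : Ω) (r : R) :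
    freeDerivLift k δ hc f (freeDeriv k X ω r) = δ ω (freeDerivLift k δ hc f r) := by
  set φ := freeDerivLift k δ hc f
  suffices φ.toLinearMap ∘ₗ freeDeriv k X ω = δ ω ∘ₗ φ.toLinearMap from
    LinearMap.congr_fun this r
  refine FreeAlgebra.linearMap_ext_of_leibniz φ (fun a b => ?_) (fun a b => ?_)
    fun ⟨α, x⟩ => ?_
  · simp [isLeibnizDerivation_freeDeriv k X ω a b]
  · simp [hδ ω (φ a) (φ b)]
  · simp [φ, Finsupp.noncommProdPow_add_single_one]

end FreeCommutingMultiDifferential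

/-- The free associative algebra `k⟨M(Ω) × X⟩` with `M(Ω) = (Ω →₀ ℕ)` carries, for
each `ω ∈ Ω`, a unique derivation `D_ω` with `D_ω ι(α,x) = ι(α + e_ω, x)`; these derivations
pairwise commute and make it the free commuting multi-differential noncommutative algebra
on `X`. -/
theorem free_commuting_multi_differential_noncommutative_algebra
    (k : Type*) [Field k] (Ω X : Type*) :
    ∃ D : Ω → (FreeAlgebra k ((Ω →₀ ℕ) × X) →ₗ[k] FreeAlgebra k ((Ω →₀ ℕ) × X)),
      (∀ ω : Ω, IsLeibnizDerivation (D ω)) ∧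
      (∀ (ω : Ω) (α : Ω →₀ ℕ) (x : X),
          D ω (FreeAlgebra.ι k (α, x)) = FreeAlgebra.ι k (α + Finsupp.single ω 1, x)) ∧
      (∀ (ω : Ω) (D' : FreeAlgebra k ((Ω →₀ ℕ) × X) →ₗ[k] FreeAlgebra k ((Ω →₀ ℕ) × X)),
          IsLeibnizDerivation D' →
          (∀ (α : Ω →₀ ℕ) (x : X),
            D' (FreeAlgebra.ι k (α, x)) = FreeAlgebra.ι k (α + Finsupp.single ω 1, x)) →
          D' = D ω) ∧
      (∀ (ω τ : Ω) (r : FreeAlgebra k ((Ω →₀ ℕ) × X)), D ω (D τ r) = D τ (D ω r)) ∧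
      (∀ (A : Type*) [Ring A] [Algebra k A] (δ : Ω → (A →ₗ[k] A)),
          (∀ ω : Ω, IsLeibnizDerivation (δ ω)) →
          (∀ (ω τ : Ω) (a : A), δ ω (δ τ a) = δ τ (δ ω a)) →
          ∀ f : X → A,
            ∃! φ : FreeAlgebra k ((Ω →₀ ℕ) × X) →ₐ[k] A,
              (∀ x : X, φ (FreeAlgebra.ι k (0, x)) = f x) ∧
              (∀ (ω : Ω) (r : FreeAlgebra k ((Ω →₀ ℕ) × X)), φ (D ω r) = δ ω (φ r))) := by
  refine ⟨freeDeriv k X, isLeibnizDerivation_freeDeriv k X, freeDeriv_ι k X,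
    fun ω _ hD hι => eq_freeDeriv_of_isLeibnizDerivation k X ω hD hι,
    freeDeriv_freeDeriv_comm k X, fun A _ _ δ hδ hδc f => ?_⟩
  have hc : ∀ ω τ, Commute (δ ω) (δ τ) := fun ω τ => LinearMap.ext (hδc ω τ)
  have hlift := freeDerivLift_freeDeriv k δ hc f hδ
  refine ⟨freeDerivLift k δ hc f, ⟨fun x => by simp, hlift⟩, fun ψ ⟨hψ₀, hψ⟩ =>
    algHom_ext_of_comp_freeDeriv k hψ hlift fun x => by simp [hψ₀]⟩
end

section
/- Let k be a field, Ω a set, A a commutative k-algebra, and (∂_ω)_{ω∈Ω} a family of pairwise commuting k-derivations of A. Define for each ω ∈ Ω a product x ▷_ω y := x · ∂_ω(y). Then (A, (▷_ω)_{ω∈Ω}) is a multi-Novikov algebra; that is, for all x, y, z ∈ A and ω, τ ∈ Ω: (x ▷_ω y) ▷_τ z − x ▷_ω (y ▷_τ z) = (y ▷_ω x) ▷_τ z − y ▷_ω (x ▷_τ z); (x ▷_ω y) ▷_τ z − x ▷_ω (y ▷_τ z) = (x ▷_τ y) ▷_ω z − x ▷_τ (y ▷_ω z); and (x ▷_ω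 y) ▷_τ z = (x ▷_τ z) ▷_ω y. -/
/-- The associator of `x ▷ y := x * D y` is symmetric in `x, y`, and in `D₁, D₂` when they
commute; these are the two multi-Novikov identities that are not plain commutativity. -/
theorem Derivation.mul_apply_associator {R A : Type*} [CommSemiring R] [CommRing A] [Algebra R A]
    (D₁ D₂ : Derivation R A A) (x y z : A) :
    x * D₁ y * D₂ z - x * D₁ (y * D₂ z) = -(x * y * D₁ (D₂ z)) := by
  rw [Derivation.leibniz, smul_eq_mul, smul_eq_mul]
  ring

/-- A commutative `k`-algebra with a family of pairwise commuting derivations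
`(∂_ω)` becomes a multi-Novikov algebra under the products `x ▷_ω y := x · ∂_ω(y)`. -/
theorem multiNovikov_of_commuting_multiDifferential_commutative
    (k : Type*) [Field k] (Ω : Type*) (A : Type*) [CommRing A] [Algebra k A]
    (d : Ω → Derivation k A A)
    (hcomm : ∀ (ω τ : Ω) (a : A), d ω (d τ a) = d τ (d ω a))
    (rhd : Ω → A → A → A)
    (hrhd : ∀ (ω : Ω) (x y : A), rhd ω x y = x * d ω y) :
    ∀ (x y z : A) (ω τ : Ω),
      (rhd τ (rhd ω x y) z - rhd ω x (rhd τ y z)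
          = rhd τ (rhd ω y x) z - rhd ω y (rhd τ x z)) ∧
      (rhd τ (rhd ω x y) z - rhd ω x (rhd τ y z)
          = rhd ω (rhd τ x y) z - rhd τ x (rhd ω y z)) ∧
      (rhd τ (rhd ω x y) z = rhd ω (rhd τ x z) y) := by
  intro x y z ω τ
  simp only [hrhd]
  refine ⟨?_, ?_, by ring⟩
  · rw [Derivation.mul_apply_associator, Derivation.mul_apply_associator, mul_comm x y]
  · rw [Derivation.mul_apply_associator, Derivation.mul_apply_associator, hcomm]
end

section
/- Let k be a field, Ω a set, A a commutative k-algebra, and (∂_ω)_{ω∈Ω} a family of k-derivations of A that are not assumed to pairwise commute. Define for each ω ∈ Ω a product x ▷_ω y := x · ∂_ω(y). Then (A, (▷_ω)_{ω∈Ω}) is a noncommuting multi-Novikov algebra; that is, for all x, y, z ∈ A and ω, τ ∈ Ω: (x ▷_ω y) ▷_τ z − x ▷_ω (y ▷_τ z) = (y ▷_ω x) ▷_τ z − y ▷_ω (x ▷_τ z), and (x ▷_ω y) ▷_τ z = (x ▷_τ z) ▷_ω y. -/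
/-- A commutative `k`-algebra with a family of (not necessarily commuting)
derivations `(∂_ω)` becomes a noncommuting multi-Novikov algebra under the products
`x ▷_ω y := x · ∂_ω(y)`. -/
theorem noncommutingMultiNovikov_of_noncommuting_multiDifferential_commutative
    (k : Type*) [Field k] (Ω : Type*) (A : Type*) [CommRing A] [Algebra k A]
    (d : Ω → Derivation k A A)
    (rhd : Ω → A → A → A)
    (hrhd : ∀ (ω : Ω) (x y : A), rhd ω x y = x * d ω y) :
    ∀ (x y z : A) (ω τ : Ω),
      (rhd τ (rhd ω x y) z - rhd ω x (rhd τ y z)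
          = rhd τ (rhd ω y x) z - rhd ω y (rhd τ x z)) ∧
      (rhd τ (rhd ω x y) z = rhd ω (rhd τ x z) y) := by
  intro x y z ω τ
  simp only [hrhd, Derivation.leibniz, smul_eq_mul]
  constructor <;> ring
end

section
/- Let k be a field, Ω a set, A an associative (not necessarily commutative) k-algebra, and (∂_ω)_{ω∈Ω} a family of pairwise commuting k-derivations of A. Define for each ω ∈ Ω the products x ▷_ω y := x · ∂_ω(y) and x ◁_ω y := ∂_ω(x) · y. Then (A, (▷_ω), (◁_ω)) is a multi-noncommutative Novikov algebra; that is, for all x, y, z ∈ A and ω, τ ∈ Ω the following six identities hold: (1) (x ◁_ω y) ▷_τ z = x ◁_ω (y ▷_τ z); (2) (x ▷_ω y) ▷_τ z − x ◁_τ (y ◁_ω z) = x ▷_τ (y ◁_ω z) − (x ▷_ω y) ◁_τ z; (3) x ▷_ω (y ▷_τ z) − x ▷_τ (y ▷_ω z) = x ▷_τ (y ◁_ω z) − x ▷_ω (y ◁_τ z); (4) (x ▷_τ y) ▷_ω z − x ◁_τ (y ◁_ω z) = x ▷_ω (y ◁_τ z) − (x ▷_ω y) ◁_τ z; (5) (x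 ◁_ω y) ◁_τ z − (x ◁_τ y) ◁_ω z = (x ▷_τ y) ◁_ω z − (x ▷_ω y) ◁_τ z; (6) x ◁_ω (y ◁_τ z) − x ◁_τ (y ◁_ω z) = (x ▷_τ y) ◁_ω z − (x ▷_ω y) ◁_τ z. -/
/-- An associative (not necessarily commutative) `k`-algebra with a family of
pairwise commuting derivations `(∂_ω)` becomes a multi-noncommutative Novikov algebra under
the products `x ▷_ω y := x · ∂_ω(y)` and `x ◁_ω y := ∂_ω(x) · y`. -/
theorem multiNoncommutativeNovikov_of_commuting_multiDifferential_noncommutative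
    (k : Type*) [Field k] (Ω : Type*) (A : Type*) [Ring A] [Algebra k A]
    (d : Ω → (A →ₗ[k] A))
    (hder : ∀ ω : Ω, IsLeibnizDerivation (d ω))
    (hcomm : ∀ (ω τ : Ω) (a : A), d ω (d τ a) = d τ (d ω a))
    (rhd lhd : Ω → A → A → A)
    (hrhd : ∀ (ω : Ω) (x y : A), rhd ω x y = x * d ω y)
    (hlhd : ∀ (ω : Ω) (x y : A), lhd ω x y = d ω x * y) :
    ∀ (x y z : A) (ω τ : Ω),
      (rhd τ (lhd ω x y) z = lhd ω x (rhd τ y z)) ∧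
      (rhd τ (rhd ω x y) z - lhd τ x (lhd ω y z)
          = rhd τ x (lhd ω y z) - lhd τ (rhd ω x y) z) ∧
      (rhd ω x (rhd τ y z) - rhd τ x (rhd ω y z)
          = rhd τ x (lhd ω y z) - rhd ω x (lhd τ y z)) ∧
      (rhd ω (rhd τ x y) z - lhd τ x (lhd ω y z)
          = rhd ω x (lhd τ y z) - lhd τ (rhd ω x y) z) ∧
      (lhd τ (lhd ω x y) z - lhd ω (lhd τ x y) z
          = lhd ω (rhd τ x y) z - lhd τ (rhd ω x y) z) ∧
      (lhd ω x (lhd τ y z) - lhd τ x (lhd ω y z)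
          = lhd ω (rhd τ x y) z - lhd τ (rhd ω x y) z) := by
  intro x y z ω τ
  have Hω : ∀ a b : A, d ω (a * b) = d ω a * b + a * d ω b := hder ω
  have Hτ : ∀ a b : A, d τ (a * b) = d τ a * b + a * d τ b := hder τ
  simp only [hrhd, hlhd, Hω, Hτ, map_add, hcomm ω τ]
  refine ⟨by noncomm_ring, by noncomm_ring, by noncomm_ring, by noncomm_ring, by noncomm_ring, by noncomm_ring⟩
end

section
/- Let k be a field, Ω a set, A an associative (not necessarily commutative) k-algebra, and (∂_ω)_{ω∈Ω} a family of k-derivations of A that are not assumed to pairwise commute. Define for each ω ∈ Ω the products x ▷_ω y := x · ∂_ω(y) and x ◁_ω y := ∂_ω(x) · y. Then (A, (▷_ω), (◁_ω)) is a noncommuting multi-noncommutative Novikov algebra; that is, for all x, y, z ∈ A and ω, τ ∈ Ω: (x ◁_ω y) ▷_τ z = x ◁_ω (y ▷_τ z), and (x ▷_ω y) ▷_τ z − x ◁_τ (y ◁_ω z) = x ▷_τ (y ◁_ω z) − (x ▷_ω y) ◁_τ z. -/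
/-- An associative (not necessarily commutative) `k`-algebra with a family of
(not necessarily commuting) derivations `(∂_ω)` becomes a noncommuting multi-noncommutative
Novikov algebra under the products `x ▷_ω y := x · ∂_ω(y)` and `x ◁_ω y := ∂_ω(x) · y`. -/
theorem noncommutingMultiNoncommutativeNovikov_of_noncommuting_multiDifferential_noncommutative
    (k : Type*) [Field k] (Ω : Type*) (A : Type*) [Ring A] [Algebra k A]
    (d : Ω → (A →ₗ[k] A))
    (hder : ∀ ω : Ω, IsLeibnizDerivation (d ω))
    (rhd lhd : Ω → A → A → A)
    (hrhd : ∀ (ω : Ω) (x y : A), rhd ω x y = x * d ω y)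
    (hlhd : ∀ (ω : Ω) (x y : A), lhd ω x y = d ω x * y) :
    ∀ (x y z : A) (ω τ : Ω),
      (rhd τ (lhd ω x y) z = lhd ω x (rhd τ y z)) ∧
      (rhd τ (rhd ω x y) z - lhd τ x (lhd ω y z)
          = rhd τ x (lhd ω y z) - lhd τ (rhd ω x y) z) := by
  intro x y z ω τ
  constructor
  · simp only [hrhd, hlhd, mul_assoc]
  · simp only [hrhd, hlhd, hder τ x (d ω y), hder τ (d ω y) z]
    noncomm_ring
end

section
/- Let k be a field, Ω and X sets, and let R = k[W(Ω) × X] be the multivariate polynomial algebra on W(Ω) × X, where W(Ω) is the free monoid on Ω, equipped with the derivations D_ω determined by D_ω(X_{(w,x)}) = X_{(ω·w, x)}. For a monomial m of R, given by an exponent function m : W(Ω) × X → ℕ with finite support, define p(m) := Σ_{(w,x)} m(w,x)·(|w| − 1) ∈ ℤ, where |w| is the length of the word w; m is populated if p(m) = −1. Then the smallest k-submodule of R containing the generators X_{(1,x)} (x ∈ X, 1 the empty word) and closed under all the operations (a, b) ↦ a · D_ω(b) (ω ∈ Ω) equals the k-linear span of the populated monomials of R. -/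
/-!
The span of the populated monomials is closed under `(a, b) ↦ a · D_ω b`: `p` is additive on
exponents and `D_ω` raises it by one on each monomial it produces.

Conversely, let `X^m` be populated and contain a variable `X_{(ωw, x)}`. Since `p(m) = -1`,
`X^m` has at least `|w|` further variables with empty word; collect `|w|` of them in `X^μ` and the
rest in `X^{m₁}`. Then `m₁` and `μ + (w, x)` are populated and, by the Leibniz rule,
`X^m = X^{m₁} · D_ω(X_{(w,x)} X^μ) - X^{m₁} X_{(w,x)} · D_ω(X^μ)`,
where every monomial of the last product is populated as well. All these monomials have smaller
weight `Σ m(w,x)·|w|²` than `m` (a derivation moved onto an empty word costs `1` instead of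
`2|w| + 1`), so induction on this weight shows that `X^m` lies in every submodule containing the
generators and closed under the operations.
-/

/-- The derivation `D_ω` on `k[W(Ω) × X]` determined by `D_ω X_{(w,x)} = X_{(ω·w, x)}`,
where `W(Ω)` is the free monoid on `Ω`. -/
noncomputable def novikovDeriv (k : Type*) [Field k] {Ω X : Type*} (ω : Ω) :
    Derivation k (MvPolynomial (FreeMonoid Ω × X) k) (MvPolynomial (FreeMonoid Ω × X) k) :=
  MvPolynomial.mkDerivation k fun p => MvPolynomial.X (FreeMonoid.of ω * p.1, p.2)

/-- For a monomial with exponent function `m`, `pCount m = Σ m(w,x)·(|w| − 1)`, the number of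
derivation occurrences minus the number of variable occurrences. -/
def pCount {Ω X : Type*} (m : (FreeMonoid Ω × X) →₀ ℕ) : ℤ :=
  m.sum fun p n => (n : ℤ) * ((p.1.length : ℤ) - 1)

/-- The set of populated monomials of `k[W(Ω) × X]`: monomials `m` with `pCount m = -1`. -/
def populatedMonomials (k : Type*) [Field k] (Ω X : Type*) :
    Set (MvPolynomial (FreeMonoid Ω × X) k) :=
  {u | ∃ m : (FreeMonoid Ω × X) →₀ ℕ, pCount m = -1 ∧ u = MvPolynomial.monomial m 1}

open Finsupp

section

variable {Ω X : Type*}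

lemma pCount_eq_weight (m : (FreeMonoid Ω × X) →₀ ℕ) :
    pCount m = weight (fun p : FreeMonoid Ω × X => (p.1.length : ℤ) - 1) m := by
  simp only [pCount, weight_apply, nsmul_eq_mul]

lemma pCount_add (m n : (FreeMonoid Ω × X) →₀ ℕ) : pCount (m + n) = pCount m + pCount n := by
  simp only [pCount_eq_weight, map_add]

lemma pCount_single (p : FreeMonoid Ω × X) (n : ℕ) :
    pCount (single p n) = n * ((p.1.length : ℤ) - 1) := by
  simp only [pCount_eq_weight, weight_single, nsmul_eq_mul]

lemma pCount_eq_neg_degree {μ : (FreeMonoid Ω × X) →₀ ℕ} (hμ : ∀ p ∈ μ.support, p.1 = 1) :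
    pCount μ = -μ.degree := by
  rw [pCount, Finsupp.sum, degree_apply, Nat.cast_sum, ← Finset.sum_neg_distrib]
  exact Finset.sum_congr rfl fun p hp => by simp [hμ p hp]

lemma pCount_nonneg {m : (FreeMonoid Ω × X) →₀ ℕ} (hm : ∀ p ∈ m.support, p.1 ≠ 1) :
    0 ≤ pCount m := by
  refine Finset.sum_nonneg fun p hp => mul_nonneg (Nat.cast_nonneg _) ?_
  have : 0 < p.1.length := Nat.pos_of_ne_zero (FreeMonoid.length_eq_zero.not.2 (hm p hp))
  omega

lemma exists_le_degree_eq_of_pCount_le {m : (FreeMonoid Ω × X) →₀ ℕ} {n : ℕ}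
    (hm : pCount m ≤ -n) : ∃ μ ≤ m, (∀ p ∈ μ.support, p.1 = 1) ∧ μ.degree = n := by
  classical
  set f := m.filter (·.1 = 1)
  have hf_mem {p} (hp : f p ≠ 0) : p.1 = 1 := by
    by_contra h
    exact hp (filter_apply_neg _ _ h)
  have hf : n ≤ f.degree := by
    have hsplit := pCount_add f (m.filter (¬ ·.1 = 1))
    rw [filter_add_filter_not] at hsplit
    have hpos := pCount_nonneg (m := m.filter (¬ ·.1 = 1)) fun p hp =>
      (Finset.mem_filter.1 hp).2
    have hneg := pCount_eq_neg_degree (μ := f) fun p hp => hf_mem (mem_support_iff.1 hp)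
    omega
  obtain ⟨μ, hμf, hμ⟩ := exists_le_degree_eq f n hf
  have hfm : f ≤ m := fun p => by
    rw [filter_apply]
    split_ifs <;> simp
  refine ⟨μ, hμf.trans hfm, fun p hp => hf_mem fun h => ?_, hμ⟩
  exact mem_support_iff.1 hp (Nat.eq_zero_of_le_zero (h ▸ hμf p))

lemma exists_eq_single_of_pCount_eq_neg_one {m : (FreeMonoid Ω × X) →₀ ℕ} (hm : pCount m = -1)
    (hempty : ∀ p ∈ m.support, p.1 = 1) : ∃ x, m = single (1, x) 1 := by
  have hdeg : m.degree = 1 := by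
    have := pCount_eq_neg_degree hempty
    omega
  obtain ⟨⟨w, x⟩, rfl⟩ := (range_single_one (σ := FreeMonoid Ω × X)).symm.subset hdeg
  obtain rfl : w = 1 := hempty (w, x) (by simp)
  exact ⟨x, rfl⟩

lemma exists_split_of_pCount_eq_neg_one {m : (FreeMonoid Ω × X) →₀ ℕ} (hm : pCount m = -1)
    {ω : Ω} {w : FreeMonoid Ω} {x : X} (hq : (FreeMonoid.of ω * w, x) ∈ m.support) :
    ∃ m₁ μ, m = m₁ + μ + single (FreeMonoid.of ω * w, x) 1 ∧ pCount m₁ = -1 ∧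
      μ.degree = w.length ∧ ∀ p ∈ μ.support, p.1 = 1 := by
  obtain ⟨m', rfl⟩ := le_iff_exists_add'.1 (single_le_iff.2 (Nat.one_le_iff_ne_zero.2
    (Finsupp.mem_support_iff.1 hq)))
  have hm' : pCount m' = -1 - w.length := by
    rw [pCount_add, pCount_single, FreeMonoid.length_mul, FreeMonoid.length_of] at hm
    push_cast at hm
    linarith
  obtain ⟨μ, hμm', hμempty, hμdeg⟩ :=
    exists_le_degree_eq_of_pCount_le (m := m') (n := w.length) (by omega)
  obtain ⟨m₁, rfl⟩ := le_iff_exists_add'.1 hμm'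
  refine ⟨m₁, μ, rfl, ?_, hμdeg, hμempty⟩
  rw [pCount_add, pCount_eq_neg_degree hμempty, hμdeg] at hm'
  omega

noncomputable def sqLengthWeight : ((FreeMonoid Ω × X) →₀ ℕ) →+ ℕ :=
  weight fun p => p.1.length ^ 2

lemma sqLengthWeight_single (p : FreeMonoid Ω × X) (n : ℕ) :
    sqLengthWeight (single p n) = n * p.1.length ^ 2 := by
  simp [sqLengthWeight, weight_single]

lemma sqLengthWeight_eq_zero {μ : (FreeMonoid Ω × X) →₀ ℕ} (hμ : ∀ p ∈ μ.support, p.1 = 1) :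
    sqLengthWeight μ = 0 :=
  Finset.sum_eq_zero fun p hp => by simp [hμ p hp]

end

section Derivation

open MvPolynomial

variable {k : Type*} [Field k] {Ω X : Type*}

lemma novikovDeriv_X (ω : Ω) (p : FreeMonoid Ω × X) :
    novikovDeriv k ω (MvPolynomial.X p) = MvPolynomial.X (FreeMonoid.of ω * p.1, p.2) :=
  mkDerivation_X _ _ _

lemma monomial_mul_novikovDeriv_monomial (ω : Ω) (m s : (FreeMonoid Ω × X) →₀ ℕ) :
    monomial m (1 : k) * novikovDeriv k ω (monomial s 1) =
      ∑ p ∈ s.support, (s p : k) •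
        monomial (m + (s - single p 1) + single (FreeMonoid.of ω * p.1, p.2) 1) 1 := by
  rw [novikovDeriv, mkDerivation_monomial, one_smul, Finsupp.sum, Finset.mul_sum]
  refine Finset.sum_congr rfl fun p _ => ?_
  simp only [MvPolynomial.X, smul_eq_mul, monomial_mul, smul_monomial, add_assoc, one_mul, mul_one]

lemma monomial_mul_novikovDeriv_monomial_mem {N : Submodule k (MvPolynomial (FreeMonoid Ω × X) k)}
    {ω : Ω} {m s : (FreeMonoid Ω × X) →₀ ℕ}
    (h : ∀ p ∈ s.support,
      monomial (m + (s - single p 1) + single (FreeMonoid.of ω * p.1, p.2) 1) 1 ∈ N) :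
    monomial m 1 * novikovDeriv k ω (monomial s 1) ∈ N := by
  rw [monomial_mul_novikovDeriv_monomial]
  exact N.sum_mem fun p hp => N.smul_mem _ (h p hp)

lemma pCount_mul_novikovDeriv_term {s : (FreeMonoid Ω × X) →₀ ℕ} {p : FreeMonoid Ω × X}
    (hp : p ∈ s.support) (m : (FreeMonoid Ω × X) →₀ ℕ) (ω : Ω) :
    pCount (m + (s - single p 1) + single (FreeMonoid.of ω * p.1, p.2) 1) =
      pCount m + pCount s + 1 := by
  obtain ⟨s', rfl⟩ := le_iff_exists_add'.1 (single_le_iff.2 (Nat.one_le_iff_ne_zero.2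
    (Finsupp.mem_support_iff.1 hp)))
  simp only [add_tsub_cancel_right, pCount_add, pCount_single, FreeMonoid.length_mul,
    FreeMonoid.length_of]
  push_cast
  ring

lemma sqLengthWeight_mul_novikovDeriv_term {s : (FreeMonoid Ω × X) →₀ ℕ} {p : FreeMonoid Ω × X}
    (hp : p ∈ s.support) (hp₁ : p.1 = 1) (m : (FreeMonoid Ω × X) →₀ ℕ) (ω : Ω) :
    sqLengthWeight (m + (s - single p 1) + single (FreeMonoid.of ω * p.1, p.2) 1) =
      sqLengthWeight m + sqLengthWeight s + 1 := by
  obtain ⟨s', rfl⟩ := le_iff_exists_add'.1 (single_le_iff.2 (Nat.one_le_iff_ne_zero.2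
    (Finsupp.mem_support_iff.1 hp)))
  simp [sqLengthWeight_single, hp₁]

lemma monomial_eq_mul_novikovDeriv_sub (ω : Ω) (w : FreeMonoid Ω) (x : X)
    (m₁ μ : (FreeMonoid Ω × X) →₀ ℕ) :
    monomial (m₁ + μ + single (FreeMonoid.of ω * w, x) 1) (1 : k) =
      monomial m₁ 1 * novikovDeriv k ω (monomial (μ + single (w, x) 1) 1) -
        monomial (m₁ + single (w, x) 1) 1 * novikovDeriv k ω (monomial μ 1) := by
  have hmul (s t : (FreeMonoid Ω × X) →₀ ℕ) :
      monomial (s + t) (1 : k) = monomial s 1 * monomial t 1 := by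
    rw [monomial_mul, one_mul]
  simp only [monomial_add_single, pow_one]
  simp only [hmul, Derivation.leibniz, novikovDeriv_X, smul_eq_mul]
  ring

lemma mul_novikovDeriv_mem_span_populatedMonomials (ω : Ω) {a b : MvPolynomial (FreeMonoid Ω × X) k}
    (ha : a ∈ Submodule.span k (populatedMonomials k Ω X))
    (hb : b ∈ Submodule.span k (populatedMonomials k Ω X)) :
    a * novikovDeriv k ω b ∈ Submodule.span k (populatedMonomials k Ω X) := by
  let f := (LinearMap.mul k (MvPolynomial (FreeMonoid Ω × X) k)).compl₂
    (novikovDeriv k ω).toLinearMap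
  have hab := Submodule.apply_mem_map₂ f ha hb
  rw [Submodule.map₂_span_span] at hab
  refine Submodule.span_le.2 ?_ hab
  rintro _ ⟨_, ⟨m, hm, rfl⟩, _, ⟨s, hs, rfl⟩, rfl⟩
  exact monomial_mul_novikovDeriv_monomial_mem fun p hp =>
    Submodule.subset_span ⟨_, by rw [pCount_mul_novikovDeriv_term hp, hm, hs]; norm_num, rfl⟩

theorem monomial_mem_of_pCount_eq_neg_one {N : Submodule k (MvPolynomial (FreeMonoid Ω × X) k)}
    (hX : ∀ x : X, MvPolynomial.X (1, x) ∈ N)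
    (hmul : ∀ (ω : Ω) (a b : MvPolynomial (FreeMonoid Ω × X) k),
      a ∈ N → b ∈ N → a * novikovDeriv k ω b ∈ N)
    {m : (FreeMonoid Ω × X) →₀ ℕ} (hm : pCount m = -1) : monomial m 1 ∈ N := by
  induction hW : sqLengthWeight m using Nat.strong_induction_on generalizing m with
  | _ W ih =>
    have ih' {m'} (hm' : pCount m' = -1) (hlt : sqLengthWeight m' < W) : monomial m' 1 ∈ N :=
      ih _ hlt hm' rfl
    by_cases hempty : ∀ p ∈ m.support, p.1 = 1
    · obtain ⟨x, rfl⟩ := exists_eq_single_of_pCount_eq_neg_one hm hempty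
      exact hX x
    push Not at hempty
    obtain ⟨⟨w₀, x⟩, hq, hw₀⟩ := hempty
    cases w₀ using FreeMonoid.casesOn with
    | one => exact absurd rfl hw₀
    | of_mul ω w => ?_
    obtain ⟨m₁, μ, rfl, hm₁, hμdeg, hμempty⟩ := exists_split_of_pCount_eq_neg_one hm hq
    have hμW := sqLengthWeight_eq_zero hμempty
    have hW : W = sqLengthWeight m₁ + (w.length + 1) ^ 2 := by
      simp [← hW, sqLengthWeight_single, hμW, FreeMonoid.length_mul, FreeMonoid.length_of, add_comm]
    have hm₂ : pCount (μ + single (w, x) 1) = -1 := by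
      rw [pCount_add, pCount_eq_neg_degree hμempty, pCount_single, hμdeg]
      ring
    rw [monomial_eq_mul_novikovDeriv_sub]
    refine N.sub_mem (hmul _ _ _ (ih' hm₁ (by nlinarith)) (ih' hm₂ ?_))
      (monomial_mul_novikovDeriv_monomial_mem fun p hp => ih' ?_ ?_)
    · simp only [map_add, hμW, sqLengthWeight_single, one_mul, zero_add, hW]
      nlinarith
    · rw [pCount_mul_novikovDeriv_term hp, pCount_add, hm₁, pCount_single,
        pCount_eq_neg_degree hμempty, hμdeg]
      ring
    · have hw : 1 ≤ w.length :=
        hμdeg ▸ (Finsupp.mem_support_iff.1 hp).bot_lt.trans_le (le_degree p μ)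
      rw [sqLengthWeight_mul_novikovDeriv_term hp (hμempty p hp), map_add, hμW,
        sqLengthWeight_single, hW]
      nlinarith

end Derivation

/-- The smallest `k`-submodule of `k[W(Ω) × X]` containing the generators
`X_{(1,x)}` and closed under all operations `(a, b) ↦ a · D_ω(b)` equals the `k`-linear span of
the populated monomials. -/
theorem noncommutingMultiNovikov_subalgebra_eq_span_populated
    (k : Type*) [Field k] (Ω X : Type*) :
    sInf {N : Submodule k (MvPolynomial (FreeMonoid Ω × X) k) |
        (∀ x : X, MvPolynomial.X (1, x) ∈ N) ∧
        ∀ (ω : Ω) (a b : MvPolynomial (FreeMonoid Ω × X) k),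
          a ∈ N → b ∈ N → a * novikovDeriv k ω b ∈ N} =
      Submodule.span k (populatedMonomials k Ω X) := by
  refine le_antisymm (sInf_le ⟨fun x => Submodule.subset_span ⟨single (1, x) 1, ?_, rfl⟩,
    fun ω a b => mul_novikovDeriv_mem_span_populatedMonomials ω⟩) ?_
  · simp [pCount_single]
  rw [Submodule.span_le]
  rintro _ ⟨m, hm, rfl⟩
  exact Submodule.mem_sInf.2 fun N hN => monomial_mem_of_pCount_eq_neg_one hN.1 hN.2 hm
end
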